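/- Suppose P > 0 and Q + V·P ≤ 0 (so that Q < Q + V·P ≤ 0). Then the explicit tuple given by R_b* = min{R, C_char}, B_e* = 0, R_e* = min{R − R_b*, E}, G_b* = C_char − R_b*, G_e* = E − R_e* is feasible for P3 and attains the minimum: f at this tuple is ≤ f(x) for every x ∈ F. -/

import Mathlib

/-- The feasible set of problem P3. -/
def P3Feasible (R E Cchar Cdis : ℝ) (Re Rb Ge Gb Be : ℝ) : Prop :=
  0 ≤ Gb + Rb ∧ Gb + Rb ≤ Cchar ∧ 0 ≤ Gb ∧ 0 ≤ Rb ∧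
  0 ≤ Be ∧ Be ≤ Cdis ∧ 0 ≤ Re + Rb ∧ Re + Rb ≤ R ∧ 0 ≤ Re ∧
  E = Re + Be + Ge ∧ 0 ≤ Ge ∧ (Gb + Rb) * Be = 0

/-- The objective function of problem P3. -/
noncomputable def P3Obj (P V Q : ℝ) (Re Rb Ge Gb Be : ℝ) : ℝ :=
  (Q + V * P) * Gb + Q * Rb - (Q + V * P) * Be - V * P * Re

/-!
Write `P3Obj = (Q + V P) (G_b + R_b - B_e) - V P (R_e + R_b)`. Since `Q + V P ≤ 0` and
`V P ≥ 0`, the objective is nonincreasing in the net charge `G_b + R_b - B_e`, which never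
exceeds `C_char`, and in the renewable usage `R_e + R_b`, which never exceeds
`min R (C_char + E)`. The greedy tuple meets both bounds at once.
-/

theorem min_add_min_sub_min {α : Type*} [AddCommGroup α] [LinearOrder α] [IsOrderedAddMonoid α]
    {a b c : α} (hc : 0 ≤ c) : min a b + min (a - min a b) c = min a (b + c) := by
  rcases le_total a b with hab | hba
  · rw [min_eq_left hab, sub_self, min_eq_left hc, add_zero,
      min_eq_left (hab.trans (le_add_of_nonneg_right hc))]
  · rw [min_eq_right hba, ← min_add_add_left, add_sub_cancel]

theorem P3Obj_eq (P V Q Re Rb Ge Gb Be : ℝ) :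
    P3Obj P V Q Re Rb Ge Gb Be = (Q + V * P) * (Gb + Rb - Be) - V * P * (Re + Rb) := by
  unfold P3Obj
  ring

namespace P3Feasible

variable {R E Cchar Cdis Re Rb Ge Gb Be : ℝ}

theorem netCharge_le (h : P3Feasible R E Cchar Cdis Re Rb Ge Gb Be) : Gb + Rb - Be ≤ Cchar := by
  obtain ⟨-, hcharge, -, -, hBe, -⟩ := h
  linarith

theorem renewable_le (h : P3Feasible R E Cchar Cdis Re Rb Ge Gb Be) :
    Re + Rb ≤ min R (Cchar + E) := by
  obtain ⟨-, hcharge, hGb, -, hBe, -, -, hRen, -, hE, hGe, -⟩ := h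
  exact le_min hRen (by linarith)

theorem obj_ge {P V Q : ℝ} (h : P3Feasible R E Cchar Cdis Re Rb Ge Gb Be)
    (hQVP : Q + V * P ≤ 0) (hVP : 0 ≤ V * P) :
    (Q + V * P) * Cchar - V * P * min R (Cchar + E) ≤ P3Obj P V Q Re Rb Ge Gb Be := by
  have hcharge := mul_le_mul_of_nonpos_left h.netCharge_le hQVP
  have hrenewable := mul_le_mul_of_nonneg_left h.renewable_le hVP
  rw [P3Obj_eq]
  linarith

end P3Feasible

section Greedy

variable {R E Cchar Cdis : ℝ}

theorem p3Feasible_greedy (hR : 0 ≤ R) (hE : 0 ≤ E) (hCchar : 0 ≤ Cchar) (hCdis : 0 ≤ Cdis) :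
    P3Feasible R E Cchar Cdis (min (R - min R Cchar) E) (min R Cchar)
      (E - min (R - min R Cchar) E) (Cchar - min R Cchar) 0 := by
  have hRb_R : min R Cchar ≤ R := min_le_left _ _
  have hRb_C : min R Cchar ≤ Cchar := min_le_right _ _
  have hRb : 0 ≤ min R Cchar := le_min hR hCchar
  have hRe : 0 ≤ min (R - min R Cchar) E := le_min (by linarith) hE
  have hRe_E : min (R - min R Cchar) E ≤ E := min_le_right _ _
  have hRe_R : min (R - min R Cchar) E ≤ R - min R Cchar := min_le_left _ _
  exact ⟨by linarith, by linarith, by linarith, hRb, le_rfl, hCdis, by linarith, by linarith, hRe,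
    by ring, by linarith, by ring⟩

theorem P3Obj_greedy (P V Q : ℝ) (hE : 0 ≤ E) :
    P3Obj P V Q (min (R - min R Cchar) E) (min R Cchar) (E - min (R - min R Cchar) E)
      (Cchar - min R Cchar) 0 = (Q + V * P) * Cchar - V * P * min R (Cchar + E) := by
  rw [P3Obj_eq, ← min_add_min_sub_min hE]
  ring

end Greedy

/-- Explicit optimal solution of P3 when `0 < P` and
`Q + V * P ≤ 0`. -/
theorem p3_explicit_solution_case1
    (R E P V Q Cchar Cdis : ℝ)
    (hR : 0 ≤ R) (hE : 0 ≤ E) (hP : 0 < P) (hV : 0 < V)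
    (hCchar : 0 ≤ Cchar) (hCdis : 0 ≤ Cdis)
    (hQVP : Q + V * P ≤ 0) :
    P3Feasible R E Cchar Cdis
      (min (R - min R Cchar) E) (min R Cchar) (E - min (R - min R Cchar) E)
      (Cchar - min R Cchar) 0 ∧
    ∀ Re' Rb' Ge' Gb' Be' : ℝ,
      P3Feasible R E Cchar Cdis Re' Rb' Ge' Gb' Be' →
      P3Obj P V Q (min (R - min R Cchar) E) (min R Cchar)
        (E - min (R - min R Cchar) E) (Cchar - min R Cchar) 0 ≤
      P3Obj P V Q Re' Rb' Ge' Gb' Be' := by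
  refine ⟨p3Feasible_greedy hR hE hCchar hCdis, fun Re' Rb' Ge' Gb' Be' hfeas => ?_⟩
  rw [P3Obj_greedy P V Q hE]
  exact hfeas.obj_ge hQVP (mul_pos hV hP).le
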